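/- arXiv:1810.04587 — 2 statements merged into one kernel-verified Lean document; each statement's English description precedes it below -/
import Mathlib

section
/- Let p be a prime, f, k positive integers, and x an integer. Then the sum of the p-adic digits of the representative of ((p^{fk}-1)/(p^f-1))·x modulo p^{fk}-1 taken in the range [0, p^{fk}-2] equals k times the sum of the p-adic digits of the representative of x modulo p^f-1 taken in the range [0, p^f-2]. -/
/-!
Write `q = p ^ f` and `G = (q ^ k - 1) / (q - 1) = 1 + q + ⋯ + q ^ (k - 1)`. Since
`q ^ k - 1 = G * (q - 1)`, reducing `G * x` modulo `q ^ k - 1` gives `G * r` with `r` the residue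
of `x` modulo `q - 1`. As `r < q`, the base-`p` expansion of `G * r = r + q r + ⋯ + q ^ (k - 1) r`
is `k` copies of the digits of `r`, each padded with zeros to length `f`.
-/

/-- Base-`p` digit sum. -/
def digitSum (p n : ℕ) : ℕ := (Nat.digits p n).sum

/-- Digit sum of the representative of `y` modulo `m` lying in `[0, m-1]`. -/
def repDigitSumNonneg (p m : ℕ) (y : ℤ) : ℕ := digitSum p (y % (m : ℤ)).toNat

open Finset

lemma digitSum_add_pow_mul {p f a : ℕ} (hp : 1 < p) (ha : a < p ^ f) (b : ℕ) :
    digitSum p (a + p ^ f * b) = digitSum p a + digitSum p b := by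
  rcases Nat.eq_zero_or_pos b with rfl | hb
  · simp [digitSum]
  have hlen : (Nat.digits p a).length ≤ f := by
    rcases Nat.eq_zero_or_pos a with rfl | ha0
    · simp
    rw [Nat.length_digits p a hp ha0.ne']
    exact Nat.log_lt_of_lt_pow ha0.ne' ha
  have hdigits := Nat.digits_append_zeroes_append_digits (n := a)
    (k := f - (Nat.digits p a).length) hp hb
  rw [Nat.add_sub_cancel' hlen] at hdigits
  simp [digitSum, ← hdigits]

lemma digitSum_mul_geom_sum {p f r : ℕ} (hp : 1 < p) (hr : r < p ^ f) (k : ℕ) :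
    digitSum p (r * ∑ i ∈ range k, (p ^ f) ^ i) = k * digitSum p r := by
  induction k with
  | zero => simp [digitSum]
  | succ k ih =>
    have hsplit : r * ∑ i ∈ range (k + 1), (p ^ f) ^ i
        = r + p ^ f * (r * ∑ i ∈ range k, (p ^ f) ^ i) := by
      rw [geom_sum_succ]; ring
    rw [hsplit, digitSum_add_pow_mul hp hr, ih]
    ring

lemma Int.natCast_mul_emod_natCast_mul (a : ℕ) (b c : ℤ) : a * b % (a * c) = a * (b % c) := by
  rcases Nat.eq_zero_or_pos a with rfl | ha
  · simp
  · exact Int.mul_emod_mul_of_pos b c (by exact_mod_cast ha)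

lemma repDigitSumNonneg_natCast_mul_mul (p G : ℕ) {m : ℕ} (hm : 0 < m) (x : ℤ) :
    repDigitSumNonneg p (G * m) (G * x) = digitSum p (G * (x % (m : ℤ)).toNat) := by
  rw [repDigitSumNonneg, Nat.cast_mul, Int.natCast_mul_emod_natCast_mul,
    Int.toNat_mul (by positivity) (Int.emod_nonneg x (by exact_mod_cast hm.ne')), Int.toNat_natCast]

theorem hasse_davenport_digit_relation_minus_general (p f k : ℕ) (hp : p.Prime)
    (hf : 0 < f) (x : ℤ) :
    repDigitSumNonneg p (p ^ (f * k) - 1) ((((p ^ (f * k) - 1) / (p ^ f - 1) : ℕ) : ℤ) * x)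
      = k * repDigitSumNonneg p (p ^ f - 1) x := by
  have hq : 2 ≤ p ^ f := hp.two_le.trans (Nat.le_self_pow hf.ne' p)
  have hM : p ^ (f * k) - 1 = (p ^ (f * k) - 1) / (p ^ f - 1) * (p ^ f - 1) := by
    refine (Nat.div_mul_cancel ?_).symm
    simpa [pow_mul] using Nat.sub_dvd_pow_sub_pow (p ^ f) 1 k
  have hG : (p ^ (f * k) - 1) / (p ^ f - 1) = ∑ i ∈ range k, (p ^ f) ^ i := by
    rw [pow_mul, Nat.geomSum_eq hq]
  set G := (p ^ (f * k) - 1) / (p ^ f - 1)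
  have hr : (x % ((p ^ f - 1 : ℕ) : ℤ)).toNat < p ^ f := by
    have := Int.emod_lt_of_pos x (by omega : (0 : ℤ) < ((p ^ f - 1 : ℕ) : ℤ))
    omega
  rw [hM, repDigitSumNonneg_natCast_mul_mul p G (by omega), hG, mul_comm,
    digitSum_mul_geom_sum hp.one_lt hr, repDigitSumNonneg]

theorem hasse_davenport_digit_relation_minus (p f k : ℕ) (hp : p.Prime)
    (hf : 0 < f) (hk : 0 < k) (x : ℤ) :
    repDigitSumNonneg p (p ^ (f * k) - 1) ((((p ^ (f * k) - 1) / (p ^ f - 1) : ℕ) : ℤ) * x)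
      = k * repDigitSumNonneg p (p ^ f - 1) x :=
  hasse_davenport_digit_relation_minus_general p f k hp hf x
end

section
/- Let K be a finite field with q elements, ψ a nontrivial additive character of K, and d_1 < ... < d_{r+1} positive integers prime to the characteristic. For multiplicative characters ρ_1,...,ρ_{r+1}, not all trivial, the Mellin transform Σ_{(t_1,...,t_{r+1}) ∈ (K^×)^{r+1}} (Σ_{x∈K} ψ(Σ_i t_i x^{d_i})) Π_i ρ_i(t_i) equals (q−1)·Π_i g(ψ,ρ_i) if Π_i ρ_i^{d_i} is trivial, and 0 otherwise; and when all ρ_i are trivial it equals (q−1)^{r+1} + (−1)^{r+1}(q−1), which is divisible by q. -/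
open Finset

/-!
Expanding the product of the characters, the Mellin transform becomes
`∑ x, ∏ i, g(ρᵢ, ψ(x^{dᵢ} ·))`. The term `x = 0` is `∏ i, ∑ a, ρᵢ a`, which vanishes unless
every `ρᵢ` is trivial. For `x ≠ 0` the substitution `t ↦ t x^{-dᵢ}` gives
`g(ρᵢ, ψ(x^{dᵢ} ·)) = ρᵢ(x)^{-dᵢ} g(ρᵢ, ψ)`, so these terms add up to
`(∑ x, χ⁻¹ x) ∏ i, g(ρᵢ, ψ)` with `χ = ∏ i, ρᵢ ^ dᵢ`, and orthogonality evaluates the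
character sums. When all `ρᵢ` are trivial, `g(1, ψ) = -1`.
-/

theorem Fintype.sum_eq_add_sum_units {G₀ M : Type*} [GroupWithZero G₀] [Fintype G₀]
    [DecidableEq G₀] [AddCommMonoid M] (f : G₀ → M) :
    ∑ x, f x = f 0 + ∑ u : G₀ˣ, f u := by
  rw [Fintype.sum_eq_add_sum_compl 0]
  congr 1
  rw [Finset.sum_subtype _ (p := (· ≠ (0 : G₀))) fun x => by simp]
  exact (Fintype.sum_equiv unitsEquivNeZero _ _ fun _ => rfl).symm

namespace MulChar

variable {R R' : Type*} [CommMonoid R] [CommRing R']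

theorem prod_apply_coe {ι : Type*} (s : Finset ι) (χ : ι → MulChar R R') (a : Rˣ) :
    (∏ i ∈ s, χ i) a = ∏ i ∈ s, χ i a := by
  induction s using Finset.cons_induction with
  | empty => simp
  | cons j s hj ih => rw [prod_cons, prod_cons, mul_apply, ih]

theorem sum_apply_eq_ite [Fintype R] [DecidableEq R] [IsDomain R'] [DecidableEq (MulChar R R')]
    (χ : MulChar R R') :
    ∑ a, χ a = if χ = 1 then (Fintype.card Rˣ : R') else 0 := by
  split_ifs with hχ
  · rw [hχ, sum_one_eq_card_units]
  · exact sum_eq_zero_of_ne_one hχ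

end MulChar

theorem AddChar.map_sum_eq_prod {A M ι : Type*} [AddCommMonoid A] [CommMonoid M]
    (ψ : AddChar A M) (s : Finset ι) (f : ι → A) :
    ψ (∑ i ∈ s, f i) = ∏ i ∈ s, ψ (f i) := by
  induction s using Finset.cons_induction with
  | empty => simp
  | cons j s hj ih => rw [sum_cons, prod_cons, map_add_eq_mul, ih]

section FiniteField

variable {K R : Type*} [Field K] [Fintype K] [CommRing R] {ι : Type*} [Fintype ι]

theorem prod_gaussSum_mulShift_pow_eq (ψ : AddChar K R) (ρ : ι → MulChar K R) (d : ι → ℕ)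
    (x : Kˣ) :
    ∏ i, gaussSum (ρ i) (ψ.mulShift ((x : K) ^ d i))
      = (∏ i, ρ i ^ d i)⁻¹ x * ∏ i, gaussSum (ρ i) ψ := by
  have hfactor : ∀ i, gaussSum (ρ i) (ψ.mulShift ((x : K) ^ d i))
      = (ρ i ^ d i)⁻¹ x * gaussSum (ρ i) ψ := fun i => by
    rw [← Units.val_pow_eq_pow_val, gaussSum_mulShift_eq, Units.val_pow_eq_pow_val,
      map_pow, ← inv_pow, MulChar.pow_apply_coe]
  rw [prod_congr rfl fun i _ => hfactor i, prod_mul_distrib, ← prod_inv_distrib,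
    MulChar.prod_apply_coe]

variable [DecidableEq K]

theorem gaussSum_mulShift_eq_sum_units (χ : MulChar K R) (ψ : AddChar K R) (c : K) :
    gaussSum χ (ψ.mulShift c) = ∑ u : Kˣ, ψ (u * c) * χ u := by
  rw [gaussSum, Fintype.sum_eq_add_sum_units, MulChar.map_zero, zero_mul, zero_add]
  simp only [AddChar.mulShift_apply, mul_comm]

theorem gaussSum_eq_sum_units (χ : MulChar K R) (ψ : AddChar K R) :
    gaussSum χ ψ = ∑ u : Kˣ, ψ u * χ u := by
  simpa using gaussSum_mulShift_eq_sum_units χ ψ 1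

variable [DecidableEq ι]

theorem sum_pi_units_addChar_mul_prod_mulChar (ψ : AddChar K R) (ρ : ι → MulChar K R)
    (c : ι → K) :
    ∑ t : ι → Kˣ, ψ (∑ i, (t i : K) * c i) * ∏ i, ρ i (t i)
      = ∏ i, gaussSum (ρ i) (ψ.mulShift (c i)) := by
  simp only [gaussSum_mulShift_eq_sum_units, Fintype.prod_sum, AddChar.map_sum_eq_prod,
    prod_mul_distrib]

theorem sum_pi_units_sum_addChar_monomial_mul_prod_mulChar [IsDomain R] (ψ : AddChar K R)
    (d : ι → ℕ) (hd : ∀ i, 0 < d i) (ρ : ι → MulChar K R) :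
    ∑ t : ι → Kˣ, (∑ x : K, ψ (∑ i, (t i : K) * x ^ d i)) * ∏ i, ρ i (t i)
      = ∏ i, ∑ a, ρ i a + (∑ a, (∏ i, ρ i ^ d i)⁻¹ a) * ∏ i, gaussSum (ρ i) ψ := by
  have hzero : ∀ i, gaussSum (ρ i) (ψ.mulShift ((0 : K) ^ d i)) = ∑ a, ρ i a := fun i => by
    simp [zero_pow (hd i).ne', gaussSum]
  calc ∑ t : ι → Kˣ, (∑ x : K, ψ (∑ i, (t i : K) * x ^ d i)) * ∏ i, ρ i (t i)
      = ∑ x : K, ∏ i, gaussSum (ρ i) (ψ.mulShift (x ^ d i)) := by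
        simp only [sum_mul, ← sum_pi_units_addChar_mul_prod_mulChar]
        exact sum_comm
    _ = ∏ i, ∑ a, ρ i a + (∑ x : Kˣ, (∏ i, ρ i ^ d i)⁻¹ x) * ∏ i, gaussSum (ρ i) ψ := by
        simp only [Fintype.sum_eq_add_sum_units, hzero, prod_gaussSum_mulShift_pow_eq, sum_mul]
    _ = _ := by
        rw [Fintype.sum_eq_add_sum_units (fun a => (∏ i, ρ i ^ d i)⁻¹ a), MulChar.map_zero,
          zero_add]

end FiniteField

theorem dvd_sub_one_pow_add_neg_one_pow_mul_sub_one {R : Type*} [CommRing R] (n : R) (k : ℕ) :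
    n ∣ (n - 1) ^ k + (-1) ^ k * (n - 1) := by
  have hpow : n ∣ (n - 1) ^ k - (-1) ^ k := by
    simpa using sub_dvd_pow_sub_pow (n - 1) (-1) k
  have hsplit : (n - 1) ^ k + (-1) ^ k * (n - 1) = ((n - 1) ^ k - (-1) ^ k) + (-1) ^ k * n := by
    ring
  rw [hsplit]
  exact dvd_add hpow (dvd_mul_left n _)

theorem mellin_transform_trivial_chi_general {K : Type*} [Field K] [Fintype K] [DecidableEq K]
    (ψ : AddChar K ℂ) (hψ : ψ ≠ 1)
    (r : ℕ) (d : Fin (r + 1) → ℕ) (hdpos : ∀ i, 0 < d i)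
    (ρ : Fin (r + 1) → MulChar K ℂ) :
    ((¬ ∀ i, ρ i = 1) →
      (∑ t : Fin (r + 1) → Kˣ,
          (∑ x : K, ψ (∑ i, (t i : K) * x ^ d i)) * ∏ i, ρ i (t i))
        = if (∏ i, (ρ i) ^ d i) = 1 then
            ((Fintype.card K : ℂ) - 1) * ∏ i, ∑ x : Kˣ, ψ (x : K) * ρ i (x : K)
          else 0) ∧
    ((∀ i, ρ i = 1) →
      (∑ t : Fin (r + 1) → Kˣ,
          (∑ x : K, ψ (∑ i, (t i : K) * x ^ d i)) * ∏ i, ρ i (t i))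
        = ((Fintype.card K : ℂ) - 1) ^ (r + 1) +
            (-1) ^ (r + 1) * ((Fintype.card K : ℂ) - 1)) ∧
    ((Fintype.card K : ℤ) ∣
        ((Fintype.card K : ℤ) - 1) ^ (r + 1) + (-1) ^ (r + 1) * ((Fintype.card K : ℤ) - 1)) := by
  have hunits : (Fintype.card Kˣ : ℂ) = Fintype.card K - 1 := by
    rw [Fintype.card_units, Nat.cast_sub Fintype.card_pos, Nat.cast_one]
  simp only [sum_pi_units_sum_addChar_monomial_mul_prod_mulChar ψ d hdpos,
    MulChar.sum_apply_eq_ite, inv_eq_one, hunits, ← gaussSum_eq_sum_units]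
  refine ⟨fun hρ => ?_, fun hρ => ?_, dvd_sub_one_pow_add_neg_one_pow_mul_sub_one _ _⟩
  · obtain ⟨j, hj⟩ := not_forall.mp hρ
    rw [prod_eq_zero (mem_univ j) (if_neg hj), zero_add]
    split_ifs <;> ring
  · have hρ1 : ρ = 1 := funext hρ
    subst hρ1
    simp only [Pi.one_apply, one_pow, prod_const_one, if_pos, prod_const, card_univ,
      Fintype.card_fin, gaussSum_one_left hψ]
    ring

theorem mellin_transform_trivial_chi {K : Type*} [Field K] [Fintype K] [DecidableEq K]
    (ψ : AddChar K ℂ) (hψ : ψ ≠ 1)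
    (r : ℕ) (d : Fin (r + 1) → ℕ) (hd : StrictMono d) (hdpos : ∀ i, 0 < d i)
    (hdp : ∀ i, Nat.Coprime (d i) (ringChar K))
    (ρ : Fin (r + 1) → MulChar K ℂ) :
    ((¬ ∀ i, ρ i = 1) →
      (∑ t : Fin (r + 1) → Kˣ,
          (∑ x : K, ψ (∑ i, (t i : K) * x ^ d i)) * ∏ i, ρ i (t i))
        = if (∏ i, (ρ i) ^ d i) = 1 then
            ((Fintype.card K : ℂ) - 1) * ∏ i, ∑ x : Kˣ, ψ (x : K) * ρ i (x : K)
          else 0) ∧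
    ((∀ i, ρ i = 1) →
      (∑ t : Fin (r + 1) → Kˣ,
          (∑ x : K, ψ (∑ i, (t i : K) * x ^ d i)) * ∏ i, ρ i (t i))
        = ((Fintype.card K : ℂ) - 1) ^ (r + 1) +
            (-1) ^ (r + 1) * ((Fintype.card K : ℂ) - 1)) ∧
    ((Fintype.card K : ℤ) ∣
        ((Fintype.card K : ℤ) - 1) ^ (r + 1) + (-1) ^ (r + 1) * ((Fintype.card K : ℤ) - 1)) :=
  mellin_transform_trivial_chi_general ψ hψ r d hdpos ρ
end
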